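/- arXiv:1908.09961 — 2 statements merged into one kernel-verified Lean document; each statement's English description precedes it below -/
import Mathlib

section
/- Let X and Z be finite types, let p : X → ℝ be a probability mass function on X, and let q₁, q₂ : X → Z → ℝ be two conditional probability mass functions (so q₁(x,·) and q₂(x,·) are probability mass functions on Z for every x). For a conditional pmf q define the mutual information I[q] = ∑_{x∈X} ∑_{z∈Z} p(x) q(x,z) log( q(x,z) / (∑_{x'∈X} p(x') q(x',z)) ) (with the convention 0·log(·) = 0). Then for every λ ∈ [0,1], the mixture q⋆ defined by q⋆(x,z) = λ q₁(x,z) + (1−λ) q₂(x,z) satisfies I[q⋆] ≤ λ I[q₁] + (1−λ) I[q₂]; that is, mutual information I(X,Z) is a convex function of the conditional distribution p(z|x). -/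
/-! Convexity of `I[q]` is, term by term, the joint convexity of `(a, c) ↦ a log (a / c)`, the
perspective of the convex function `x ↦ x log x`. Since the marginal is linear in `q`, a mixture of
conditionals mixes numerators and denominators of every term with the same weights. -/

open Finset

/-- The marginal of `Z` induced by the pmf `p` on `X` and the conditional pmf `q`. -/
noncomputable def marginal {X Z : Type*} [Fintype X] [Fintype Z]
    (p : X → ℝ) (q : X → Z → ℝ) (z : Z) : ℝ :=
  ∑ x, p x * q x z

/-- Mutual information `I(X,Z)` as a functional of the conditional pmf `q`,
with the convention `0 · log(·) = 0` (note `Real.log 0 = 0`). -/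
noncomputable def mutualInfoOfCond {X Z : Type*} [Fintype X] [Fintype Z]
    (p : X → ℝ) (q : X → Z → ℝ) : ℝ :=
  ∑ x, ∑ z, p x * q x z * Real.log (q x z / marginal p q z)

namespace Real

/-- The log-sum inequality for two terms. -/
theorem add_mul_log_div_add_le {a b c d : ℝ} (ha : 0 ≤ a) (hb : 0 ≤ b) (hc : 0 ≤ c) (hd : 0 ≤ d)
    (hac : c = 0 → a = 0) (hbd : d = 0 → b = 0) :
    (a + b) * log ((a + b) / (c + d)) ≤ a * log (a / c) + b * log (b / d) := by
  rcases hc.eq_or_lt with rfl | hc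
  · simp [hac rfl]
  rcases hd.eq_or_lt with rfl | hd
  · simp [hbd rfl]
  have hcd : 0 < c + d := add_pos hc hd
  have key := convexOn_mul_log.2 (Set.mem_Ici.2 (div_nonneg ha hc.le))
    (Set.mem_Ici.2 (div_nonneg hb hd.le)) (div_nonneg hc.le hcd.le) (div_nonneg hd.le hcd.le)
    (by field_simp)
  have hmean : c / (c + d) * (a / c) + d / (c + d) * (b / d) = (a + b) / (c + d) := by
    field_simp
  simp only [smul_eq_mul, hmean] at key
  calc (a + b) * log ((a + b) / (c + d))
      = (c + d) * ((a + b) / (c + d) * log ((a + b) / (c + d))) := by field_simp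
    _ ≤ (c + d) * (c / (c + d) * (a / c * log (a / c)) + d / (c + d) * (b / d * log (b / d))) :=
        mul_le_mul_of_nonneg_left key hcd.le
    _ = a * log (a / c) + b * log (b / d) := by field_simp

theorem mul_mul_log_mul_div_mul_left {s : ℝ} (hs : 0 ≤ s) (a c : ℝ) :
    s * a * log (s * a / (s * c)) = s * (a * log (a / c)) := by
  rcases hs.eq_or_lt with rfl | hs
  · simp
  · rw [mul_div_mul_left _ _ hs.ne', mul_assoc]

theorem mul_log_div_mix_le {s t a₁ a₂ c₁ c₂ : ℝ} (hs : 0 ≤ s) (ht : 0 ≤ t)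
    (ha₁ : 0 ≤ a₁) (ha₂ : 0 ≤ a₂) (hc₁ : 0 ≤ c₁) (hc₂ : 0 ≤ c₂)
    (hac₁ : c₁ = 0 → a₁ = 0) (hac₂ : c₂ = 0 → a₂ = 0) :
    (s * a₁ + t * a₂) * log ((s * a₁ + t * a₂) / (s * c₁ + t * c₂))
      ≤ s * (a₁ * log (a₁ / c₁)) + t * (a₂ * log (a₂ / c₂)) := by
  have hscale {w a c : ℝ} (hac : c = 0 → a = 0) : w * c = 0 → w * a = 0 := by
    intro h
    rcases mul_eq_zero.1 h with h | h <;> simp [h, hac]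
  rw [← mul_mul_log_mul_div_mul_left hs, ← mul_mul_log_mul_div_mul_left ht]
  exact add_mul_log_div_add_le (mul_nonneg hs ha₁) (mul_nonneg ht ha₂) (mul_nonneg hs hc₁)
    (mul_nonneg ht hc₂) (hscale hac₁) (hscale hac₂)

end Real

section Marginal

variable {X Z : Type*} [Fintype X] [Fintype Z] {p : X → ℝ} {q : X → Z → ℝ}

theorem marginal_nonneg (hp : ∀ x, 0 ≤ p x) (hq : ∀ x z, 0 ≤ q x z) (z : Z) :
    0 ≤ marginal p q z :=
  sum_nonneg fun x _ => mul_nonneg (hp x) (hq x z)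

theorem eq_zero_of_marginal_eq_zero (hp : ∀ x, 0 ≤ p x) (hq : ∀ x z, 0 ≤ q x z) {x : X} {z : Z}
    (hx : p x ≠ 0) (h : marginal p q z = 0) : q x z = 0 := by
  have := (sum_eq_zero_iff_of_nonneg fun x _ => mul_nonneg (hp x) (hq x z)).1 h x (mem_univ x)
  exact (mul_eq_zero.1 this).resolve_left hx

theorem marginal_mix (p : X → ℝ) (q₁ q₂ : X → Z → ℝ) (s t : ℝ) (z : Z) :
    marginal p (fun x z => s * q₁ x z + t * q₂ x z) z
      = s * marginal p q₁ z + t * marginal p q₂ z := by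
  simp only [marginal, mul_sum, ← sum_add_distrib]
  exact sum_congr rfl fun x _ => by ring

end Marginal

theorem mutualInfo_convex_in_conditional_general
    {X Z : Type*} [Fintype X] [Fintype Z]
    (p : X → ℝ) (hp : ∀ x, 0 ≤ p x)
    (q₁ q₂ : X → Z → ℝ)
    (hq₁ : ∀ x z, 0 ≤ q₁ x z)
    (hq₂ : ∀ x z, 0 ≤ q₂ x z)
    (l : ℝ) (hl0 : 0 ≤ l) (hl1 : l ≤ 1) :
    mutualInfoOfCond p (fun x z => l * q₁ x z + (1 - l) * q₂ x z)
      ≤ l * mutualInfoOfCond p q₁ + (1 - l) * mutualInfoOfCond p q₂ := by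
  have hl : 0 ≤ 1 - l := sub_nonneg.2 hl1
  simp only [mutualInfoOfCond, marginal_mix, mul_sum, ← sum_add_distrib]
  gcongr with x _ z _
  rcases (hp x).eq_or_lt with hpx | hpx
  · simp [← hpx]
  calc p x * (l * q₁ x z + (1 - l) * q₂ x z) *
        Real.log ((l * q₁ x z + (1 - l) * q₂ x z) /
          (l * marginal p q₁ z + (1 - l) * marginal p q₂ z))
      ≤ p x * (l * (q₁ x z * Real.log (q₁ x z / marginal p q₁ z))
          + (1 - l) * (q₂ x z * Real.log (q₂ x z / marginal p q₂ z))) := by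
        rw [mul_assoc]
        exact mul_le_mul_of_nonneg_left (Real.mul_log_div_mix_le hl0 hl (hq₁ x z) (hq₂ x z)
          (marginal_nonneg hp hq₁ z) (marginal_nonneg hp hq₂ z)
          (eq_zero_of_marginal_eq_zero hp hq₁ hpx.ne') (eq_zero_of_marginal_eq_zero hp hq₂ hpx.ne'))
          hpx.le
    _ = _ := by ring

/-- Mutual information `I(X,Z)` is a convex function of the conditional
distribution `q(z|x)`. -/
theorem mutualInfo_convex_in_conditional
    {X Z : Type*} [Fintype X] [Fintype Z]
    (p : X → ℝ) (hp : ∀ x, 0 ≤ p x) (hpsum : ∑ x, p x = 1)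
    (q₁ q₂ : X → Z → ℝ)
    (hq₁ : ∀ x z, 0 ≤ q₁ x z) (hq₁sum : ∀ x, ∑ z, q₁ x z = 1)
    (hq₂ : ∀ x z, 0 ≤ q₂ x z) (hq₂sum : ∀ x, ∑ z, q₂ x z = 1)
    (l : ℝ) (hl0 : 0 ≤ l) (hl1 : l ≤ 1) :
    mutualInfoOfCond p (fun x z => l * q₁ x z + (1 - l) * q₂ x z)
      ≤ l * mutualInfoOfCond p q₁ + (1 - l) * mutualInfoOfCond p q₂ :=
  mutualInfo_convex_in_conditional_general p hp q₁ q₂ hq₁ hq₂ l hl0 hl1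
end

section
/- Let Y, Z, Z' be random variables taking values in finite types, defined on a common probability space with a joint probability mass function, where Z takes values in a finite type of cardinality N ≥ 1, and suppose I(Z';Y) ≤ I(Z;Y). Then the JEMMIG score satisfies 0 ≤ H(Z,Y) − I(Z;Y) + I(Z';Y) ≤ H(Y) + log N. -/
/-!
The lower bound holds because `H(Z,Y)` dominates both `H(Z)` and `H(Y)`, hence `I(Z;Y)`, while
`I(Z';Y) ≥ 0`. For the upper bound, `I(Z';Y) ≤ I(Z;Y)` leaves `H(Z,Y) ≤ H(Z) + H(Y)`, and
`H(Z) ≤ log N`. Subadditivity and the maximum-entropy bound are Gibbs' inequality against the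
product of the marginals and against the uniform distribution; `H(φ ∘ f) ≤ H(f)` holds because
coarsening `f` can only increase the probability of the value it takes.
-/

open Finset

/-- The distribution (pmf) of a random variable `f` on a finite sample space with pmf `p`. -/
noncomputable def dist {Ω A : Type*} [Fintype Ω] [DecidableEq A]
    (p : Ω → ℝ) (f : Ω → A) (a : A) : ℝ :=
  ∑ ω, if f ω = a then p ω else 0

/-- Shannon entropy of a random variable `f` (convention `0 · log 0 = 0`). -/
noncomputable def entropy {Ω A : Type*} [Fintype Ω] [Fintype A] [DecidableEq A]
    (p : Ω → ℝ) (f : Ω → A) : ℝ :=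
  -∑ a, dist p f a * Real.log (dist p f a)

/-- Mutual information `I(f;g) = H(f) + H(g) − H(f,g)`. -/
noncomputable def mutualInfo {Ω A B : Type*} [Fintype Ω] [Fintype A] [Fintype B]
    [DecidableEq A] [DecidableEq B] (p : Ω → ℝ) (f : Ω → A) (g : Ω → B) : ℝ :=
  entropy p f + entropy p g - entropy p (fun ω => (f ω, g ω))

/-- The conditional distribution of `f` given `h = c`. -/
noncomputable def condDist {Ω A C : Type*} [Fintype Ω] [DecidableEq A] [DecidableEq C]
    (p : Ω → ℝ) (f : Ω → A) (h : Ω → C) (c : C) (a : A) : ℝ :=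
  (∑ ω, if f ω = a ∧ h ω = c then p ω else 0) / dist p h c

/-- The entropy of `f` conditioned on the event `h = c`. -/
noncomputable def condEntropy {Ω A C : Type*} [Fintype Ω] [Fintype A] [Fintype C]
    [DecidableEq A] [DecidableEq C] (p : Ω → ℝ) (f : Ω → A) (h : Ω → C) (c : C) : ℝ :=
  -∑ a, condDist p f h c a * Real.log (condDist p f h c a)

/-- Conditional mutual information
`I(f;g | h) = ∑_c P(h=c) [H(f|h=c) + H(g|h=c) − H(f,g|h=c)]`. -/
noncomputable def condMutualInfo {Ω A B C : Type*} [Fintype Ω] [Fintype A] [Fintype B]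
    [Fintype C] [DecidableEq A] [DecidableEq B] [DecidableEq C]
    (p : Ω → ℝ) (f : Ω → A) (g : Ω → B) (h : Ω → C) : ℝ :=
  ∑ c, dist p h c *
    (condEntropy p f h c + condEntropy p g h c
      - condEntropy p (fun ω => (f ω, g ω)) h c)

lemma mul_log_le_mul_log_add_sub {u v : ℝ} (hu : 0 ≤ u) (hv : 0 ≤ v) (huv : v = 0 → u = 0) :
    u * Real.log v ≤ u * Real.log u + (v - u) := by
  rcases hu.eq_or_lt with rfl | hu
  · simpa using hv
  have hv : 0 < v := hv.lt_of_ne fun h => hu.ne' (huv h.symm)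
  have := Real.log_le_sub_one_of_pos (div_pos hv hu)
  rw [Real.log_div hv.ne' hu.ne'] at this
  have := mul_le_mul_of_nonneg_left this hu.le
  rw [mul_sub_one, mul_div_cancel₀ _ hu.ne'] at this
  linarith

/-- Gibbs' inequality. -/
lemma sum_mul_log_le_sum_mul_log {ι : Type*} [Fintype ι] {u v : ι → ℝ} (hu : ∀ i, 0 ≤ u i)
    (hv : ∀ i, 0 ≤ v i) (huv : ∀ i, v i = 0 → u i = 0) (hsum : ∑ i, v i ≤ ∑ i, u i) :
    ∑ i, u i * Real.log (v i) ≤ ∑ i, u i * Real.log (u i) := by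
  have := sum_le_sum fun i (_ : i ∈ univ) => mul_log_le_mul_log_add_sub (hu i) (hv i) (huv i)
  rw [sum_add_distrib, sum_sub_distrib] at this
  linarith

section

variable {Ω A B : Type*} [Fintype Ω] [DecidableEq A] [DecidableEq B] {p : Ω → ℝ}

lemma dist_nonneg_of_nonneg (hp : ∀ ω, 0 ≤ p ω) (f : Ω → A) (a : A) : 0 ≤ dist p f a :=
  sum_nonneg fun ω _ => by split_ifs <;> simp [hp ω]

lemma apply_le_dist (hp : ∀ ω, 0 ≤ p ω) (f : Ω → A) (ω : Ω) : p ω ≤ dist p f (f ω) :=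
  single_le_sum (f := fun ω' => if f ω' = f ω then p ω' else 0)
    (fun ω' _ => by split_ifs <;> simp [hp ω']) (mem_univ ω) |>.trans_eq' (by simp)

lemma dist_le_dist_comp (hp : ∀ ω, 0 ≤ p ω) (f : Ω → A) (φ : A → B) (a : A) :
    dist p f a ≤ dist p (fun ω => φ (f ω)) (φ a) :=
  sum_le_sum fun ω _ => by split_ifs with h h' <;> simp_all [hp ω]

lemma sum_dist_mul [Fintype A] (f : Ω → A) (g : A → ℝ) :
    ∑ a, dist p f a * g a = ∑ ω, p ω * g (f ω) := by
  simp only [_root_.dist, sum_mul, ite_mul, zero_mul]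
  rw [sum_comm]
  simp

lemma sum_dist [Fintype A] (f : Ω → A) : ∑ a, dist p f a = ∑ ω, p ω := by
  simpa using sum_dist_mul f fun _ => 1

lemma entropy_eq_neg_sum_mul_log_dist [Fintype A] (f : Ω → A) :
    entropy p f = -∑ ω, p ω * Real.log (dist p f (f ω)) := by
  rw [entropy, sum_dist_mul f fun a => Real.log (dist p f a)]

lemma entropy_comp_le [Fintype A] [Fintype B] (hp : ∀ ω, 0 ≤ p ω) (φ : A → B) (f : Ω → A) :
    entropy p (fun ω => φ (f ω)) ≤ entropy p f := by
  rw [entropy_eq_neg_sum_mul_log_dist, entropy_eq_neg_sum_mul_log_dist, neg_le_neg_iff]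
  refine sum_le_sum fun ω _ => ?_
  rcases (hp ω).eq_or_lt with h0 | hpos
  · simp [← h0]
  · have hf : 0 < dist p f (f ω) := hpos.trans_le (apply_le_dist hp f ω)
    exact mul_le_mul_of_nonneg_left
      (Real.log_le_log hf (dist_le_dist_comp hp f φ (f ω))) hpos.le

lemma entropy_le_log_card [Fintype A] (hp : ∀ ω, 0 ≤ p ω) (hpsum : ∑ ω, p ω = 1)
    (f : Ω → A) : entropy p f ≤ Real.log (Fintype.card A) := by
  cases isEmpty_or_nonempty A
  · simp [entropy]
  have hcard : (0 : ℝ) < Fintype.card A := by exact_mod_cast Fintype.card_pos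
  have hgibbs := sum_mul_log_le_sum_mul_log (u := dist p f) (v := fun _ => (Fintype.card A : ℝ)⁻¹)
    (dist_nonneg_of_nonneg hp f) (fun _ => by positivity) (fun _ h => absurd h (by positivity))
    (by simp [sum_dist, hpsum, hcard.ne'])
  rw [← sum_mul, sum_dist, hpsum, one_mul, Real.log_inv] at hgibbs
  rw [entropy]
  linarith

lemma entropy_pair_le_add [Fintype A] [Fintype B] (hp : ∀ ω, 0 ≤ p ω) (hpsum : ∑ ω, p ω = 1)
    (f : Ω → A) (g : Ω → B) :
    entropy p (fun ω => (f ω, g ω)) ≤ entropy p f + entropy p g := by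
  set q := dist p (fun ω => (f ω, g ω))
  have hq : ∀ ab, 0 ≤ q ab := dist_nonneg_of_nonneg hp _
  have hq_fst : ∀ ab : A × B, q ab ≤ dist p f ab.1 := dist_le_dist_comp hp _ Prod.fst
  have hq_snd : ∀ ab : A × B, q ab ≤ dist p g ab.2 := dist_le_dist_comp hp _ Prod.snd
  have hgibbs := sum_mul_log_le_sum_mul_log (u := q)
    (v := fun ab => dist p f ab.1 * dist p g ab.2) hq
    (fun ab => mul_nonneg (dist_nonneg_of_nonneg hp f _) (dist_nonneg_of_nonneg hp g _))
    (fun ab h => by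
      rcases mul_eq_zero.mp h with h | h
      · exact le_antisymm (h ▸ hq_fst ab) (hq ab)
      · exact le_antisymm (h ▸ hq_snd ab) (hq ab))
    (by rw [Fintype.sum_prod_type, ← Fintype.sum_mul_sum, sum_dist, sum_dist, sum_dist, hpsum,
      one_mul])
  have hcross : ∑ ab, q ab * Real.log (dist p f ab.1 * dist p g ab.2)
      = -(entropy p f + entropy p g) := by
    rw [sum_dist_mul (fun ω => (f ω, g ω)) fun ab => Real.log (dist p f ab.1 * dist p g ab.2),
      entropy_eq_neg_sum_mul_log_dist, entropy_eq_neg_sum_mul_log_dist, ← neg_add, neg_neg,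
      ← sum_add_distrib]
    refine sum_congr rfl fun ω _ => ?_
    rcases (hp ω).eq_or_lt with h0 | hpos
    · simp [← h0]
    · rw [Real.log_mul (hpos.trans_le (apply_le_dist hp f ω)).ne'
        (hpos.trans_le (apply_le_dist hp g ω)).ne', mul_add]
  rw [hcross] at hgibbs
  rw [entropy]
  linarith

lemma mutualInfo_nonneg [Fintype A] [Fintype B] (hp : ∀ ω, 0 ≤ p ω) (hpsum : ∑ ω, p ω = 1)
    (f : Ω → A) (g : Ω → B) : 0 ≤ mutualInfo p f g :=
  sub_nonneg.mpr (entropy_pair_le_add hp hpsum f g)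

end

theorem jemmig_bounds_general
    {Ω A A' B : Type*} [Fintype Ω] [Fintype A] [Fintype A'] [Fintype B]
    [DecidableEq A] [DecidableEq A'] [DecidableEq B]
    (p : Ω → ℝ) (hp : ∀ ω, 0 ≤ p ω) (hpsum : ∑ ω, p ω = 1)
    (Y : Ω → B) (Z : Ω → A) (Z' : Ω → A')
    (N : ℕ) (hN : Fintype.card A = N)
    (hle : mutualInfo p Z' Y ≤ mutualInfo p Z Y) :
    0 ≤ entropy p (fun ω => (Z ω, Y ω)) - mutualInfo p Z Y + mutualInfo p Z' Y ∧
      entropy p (fun ω => (Z ω, Y ω)) - mutualInfo p Z Y + mutualInfo p Z' Y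
        ≤ entropy p Y + Real.log N := by
  have hI' : 0 ≤ mutualInfo p Z' Y := mutualInfo_nonneg hp hpsum Z' Y
  have hI : mutualInfo p Z Y = entropy p Z + entropy p Y - entropy p (fun ω => (Z ω, Y ω)) := rfl
  have hZ : entropy p Z ≤ entropy p (fun ω => (Z ω, Y ω)) :=
    entropy_comp_le hp Prod.fst fun ω => (Z ω, Y ω)
  have hY : entropy p Y ≤ entropy p (fun ω => (Z ω, Y ω)) :=
    entropy_comp_le hp Prod.snd fun ω => (Z ω, Y ω)
  have hsub := entropy_pair_le_add hp hpsum Z Y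
  have hlogN : entropy p Z ≤ Real.log N := hN ▸ entropy_le_log_card hp hpsum Z
  constructor <;> linarith

/-- The JEMMIG score `H(Z,Y) − I(Z;Y) + I(Z';Y)` lies in
`[0, H(Y) + log N]`, where `N` is the cardinality of the value type of `Z`. -/
theorem jemmig_bounds
    {Ω A A' B : Type*} [Fintype Ω] [Fintype A] [Fintype A'] [Fintype B]
    [DecidableEq A] [DecidableEq A'] [DecidableEq B]
    (p : Ω → ℝ) (hp : ∀ ω, 0 ≤ p ω) (hpsum : ∑ ω, p ω = 1)
    (Y : Ω → B) (Z : Ω → A) (Z' : Ω → A')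
    (N : ℕ) (hN : Fintype.card A = N) (hN1 : 1 ≤ N)
    (hle : mutualInfo p Z' Y ≤ mutualInfo p Z Y) :
    0 ≤ entropy p (fun ω => (Z ω, Y ω)) - mutualInfo p Z Y + mutualInfo p Z' Y ∧
      entropy p (fun ω => (Z ω, Y ω)) - mutualInfo p Z Y + mutualInfo p Z' Y
        ≤ entropy p Y + Real.log N :=
  jemmig_bounds_general p hp hpsum Y Z Z' N hN hle
end
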